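/- arXiv:2002.03542 — 2 statements merged into one kernel-verified Lean document; each statement's English description precedes it below -/
import Mathlib

section
/- Let F be an intersection-closed family of subsets of X, let U_1,...,U_n ∈ F and X ∈ F realize a code C ⊆ 2^{[n]}, and let σ ⊆ [n]. Setting V_i = U_i ∩ (∩_{j∈σ} U_j) and Y = X ∩ (∩_{j∈σ} U_j), the sets V_1,...,V_n realize the trunk Tk_C(σ) relative to Y, i.e., code({V_1,...,V_n}, Y) = Tk_C(σ). -/
/-!
A point `x` of the ambient set witnesses the codeword `{i | x ∈ U i}`. Restricting to
`⋂_{j∈σ} U_j` keeps exactly the points whose codeword contains `σ`, and on those points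
intersecting each `U_i` with `⋂_{j∈σ} U_j` does not change the codeword. Membership in `F`
follows by intersecting one `U_j` at a time.
-/

/-- The code of the cover `U` relative to the ambient set `Xs`. -/
def codeOf {α : Type*} {n : ℕ} (U : Fin n → Set α) (Xs : Set α) :
    Set (Finset (Fin n)) :=
  {τ | ((Xs ∩ ⋂ i ∈ τ, U i) \ ⋃ j, ⋃ (_ : j ∉ τ), U j).Nonempty}

/-- The trunk of `σ` in a code `C`. -/
def Tk {V : Type*} (C : Set (Finset V)) (σ : Finset V) : Set (Finset V) :=
  {τ ∈ C | σ ⊆ τ}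

theorem inter_biInter_mem_of_inter_mem {α ι : Type*} {F : Set (Set α)}
    (hinter : ∀ A ∈ F, ∀ B ∈ F, A ∩ B ∈ F) {U : ι → Set α} (hU : ∀ i, U i ∈ F)
    {A : Set α} (hA : A ∈ F) (s : Finset ι) : A ∩ ⋂ j ∈ s, U j ∈ F := by
  classical
  induction s using Finset.induction_on with
  | empty => simpa using hA
  | insert a s _ ih =>
    have hsplit : A ∩ ⋂ j ∈ insert a s, U j = (A ∩ ⋂ j ∈ s, U j) ∩ U a := by
      rw [Finset.set_biInter_insert]
      ac_rfl
    exact hsplit ▸ hinter _ ih _ (hU a)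

theorem mem_codeOf_iff {α : Type*} {n : ℕ} {U : Fin n → Set α} {Xs : Set α}
    {τ : Finset (Fin n)} : τ ∈ codeOf U Xs ↔ ∃ x ∈ Xs, ∀ i, x ∈ U i ↔ i ∈ τ := by
  simp only [codeOf, Set.mem_ofPred_eq, Set.Nonempty, Set.mem_sdiff, Set.mem_inter_iff,
    Set.mem_iInter, Set.mem_iUnion, not_exists]
  refine exists_congr fun x => ⟨?_, ?_⟩
  · rintro ⟨⟨hx, hin⟩, hout⟩
    exact ⟨hx, fun i => ⟨fun hxi => by_contra fun hi => hout i hi hxi, hin i⟩⟩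
  · rintro ⟨hx, hcode⟩
    exact ⟨⟨hx, fun i hi => (hcode i).2 hi⟩, fun j hj hxj => hj ((hcode j).1 hxj)⟩

theorem codeOf_inter_biInter_eq_Tk {α : Type*} {n : ℕ} (U : Fin n → Set α) (Xs : Set α)
    (σ : Finset (Fin n)) :
    codeOf (fun i => U i ∩ ⋂ j ∈ σ, U j) (Xs ∩ ⋂ j ∈ σ, U j) = Tk (codeOf U Xs) σ := by
  ext τ
  simp only [Tk, Set.mem_ofPred_eq, mem_codeOf_iff, Set.mem_inter_iff, Set.mem_iInter]
  constructor
  · rintro ⟨x, ⟨hx, hσ⟩, hcode⟩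
    have hcode' : ∀ i, x ∈ U i ↔ i ∈ τ := fun i => (and_iff_left hσ).symm.trans (hcode i)
    exact ⟨⟨x, hx, hcode'⟩, fun j hj => (hcode' j).1 (hσ j hj)⟩
  · rintro ⟨⟨x, hx, hcode⟩, hστ⟩
    have hσ : ∀ j ∈ σ, x ∈ U j := fun j hj => (hcode j).2 (hστ hj)
    exact ⟨x, ⟨hx, hσ⟩, fun i => (and_iff_left hσ).trans (hcode i)⟩

theorem stmt6_general {α : Type*} {n : ℕ} (F : Set (Set α))
    (hinter : ∀ A ∈ F, ∀ B ∈ F, A ∩ B ∈ F)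
    (Xs : Set α) (hXs : Xs ∈ F)
    (U : Fin n → Set α) (hU : ∀ i, U i ∈ F)
    (σ : Finset (Fin n)) :
    (∀ i, U i ∩ ⋂ j ∈ σ, U j ∈ F) ∧
    (Xs ∩ ⋂ j ∈ σ, U j) ∈ F ∧
    codeOf (fun i => U i ∩ ⋂ j ∈ σ, U j) (Xs ∩ ⋂ j ∈ σ, U j) =
      Tk (codeOf U Xs) σ :=
  ⟨fun i => inter_biInter_mem_of_inter_mem hinter hU (hU i) σ,
    inter_biInter_mem_of_inter_mem hinter hU hXs σ, codeOf_inter_biInter_eq_Tk U Xs σ⟩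

/-- Restricting an `F`-realization of `C` to `⋂_{j∈σ} U_j` realizes the trunk `Tk_C(σ)`:
with `V_i = U_i ∩ ⋂_{j∈σ} U_j` and `Y = X ∩ ⋂_{j∈σ} U_j`, one has
`code(V, Y) = Tk_C(σ)`, and the sets involved stay in `F`. -/
theorem stmt6 {α : Type*} {n : ℕ} (F : Set (Set α))
    (hempty : ∅ ∈ F) (hinter : ∀ A ∈ F, ∀ B ∈ F, A ∩ B ∈ F)
    (Xs : Set α) (hXs : Xs ∈ F)
    (U : Fin n → Set α) (hU : ∀ i, U i ∈ F)
    (σ : Finset (Fin n)) :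
    (∀ i, U i ∩ ⋂ j ∈ σ, U j ∈ F) ∧
    (Xs ∩ ⋂ j ∈ σ, U j) ∈ F ∧
    codeOf (fun i => U i ∩ ⋂ j ∈ σ, U j) (Xs ∩ ⋂ j ∈ σ, U j) =
      Tk (codeOf U Xs) σ :=
  stmt6_general F hinter Xs hXs U hU σ
end

section
/- Codes with good-cover realizations by sets drawn from an intersection-closed family form a down-set under the image-of-morphism order: if C = code(U, X) with U ⊆ F for an intersection-closed family F of subsets of X, and D is either the image of C under a code morphism or a trunk of C, then D = code(V, Y) for some V ⊆ F and Y ∈ F ∪ {X}. -/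
/-!
A code is the set of codewords `{i | x ∈ U i}` of the points `x ∈ X`. The codeword of `x`
for the cover `Vⱼ = X ∩ ⋂_{i ∈ σⱼ} Uᵢ` records exactly which trunks `Tk(σⱼ)` contain the
codeword of `x` for `U`, so the image of `code(U, X)` under the morphism given by these
trunks is `code(V, X)`. The trunk `Tk(τ)` consists of the codewords of the points of
`X ∩ ⋂_{i ∈ τ} Uᵢ`, so it is `code(U, X ∩ ⋂_{i ∈ τ} Uᵢ)`. All the sets involved are finite
intersections of members of `F` containing `X`, hence lie in `F`.
-/

section Codes

variable {α : Type*} {n : ℕ}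

open Classical in
noncomputable def codeword (U : Fin n → Set α) (x : α) : Finset (Fin n) :=
  Finset.univ.filter fun i => x ∈ U i

@[simp]
lemma mem_codeword {U : Fin n → Set α} {x : α} {i : Fin n} : i ∈ codeword U x ↔ x ∈ U i := by
  simp [codeword]

lemma subset_codeword_iff {U : Fin n → Set α} {x : α} {σ : Finset (Fin n)} :
    σ ⊆ codeword U x ↔ x ∈ ⋂ i ∈ σ, U i := by
  simp only [Finset.subset_iff, mem_codeword, Set.mem_iInter]

lemma codeOf_eq_image_codeword (U : Fin n → Set α) (Xs : Set α) :
    codeOf U Xs = codeword U '' Xs := by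
  ext τ
  have hmem (x : α) : x ∈ (Xs ∩ ⋂ i ∈ τ, U i) \ ⋃ j, ⋃ (_ : j ∉ τ), U j ↔
      x ∈ Xs ∧ codeword U x = τ := by
    simp only [Set.mem_sdiff, Set.mem_inter_iff, Set.mem_iInter, Set.mem_iUnion, not_exists,
      Finset.ext_iff, mem_codeword]
    constructor
    · rintro ⟨⟨hx, hin⟩, hout⟩
      exact ⟨hx, fun i => ⟨fun hxi => by_contra fun hi => hout i hi hxi, hin i⟩⟩
    · rintro ⟨hx, h⟩
      exact ⟨⟨hx, fun i => (h i).2⟩, fun i hi hxi => hi ((h i).1 hxi)⟩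
  simp only [codeOf, Set.mem_ofPred_eq, Set.Nonempty, hmem, Set.mem_image]

lemma codeword_inter_biInter {U : Fin n → Set α} {Xs : Set α} {x : α} (hx : x ∈ Xs)
    {m : ℕ} (σs : Fin m → Finset (Fin n)) :
    codeword (fun j => Xs ∩ ⋂ i ∈ σs j, U i) x =
      Finset.univ.filter fun j => σs j ⊆ codeword U x := by
  ext j
  simp [subset_codeword_iff, hx]

lemma tk_codeOf (U : Fin n → Set α) (Xs : Set α) (τ : Finset (Fin n)) :
    Tk (codeOf U Xs) τ = codeOf U (Xs ∩ ⋂ i ∈ τ, U i) := by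
  have hpre : codeword U ⁻¹' {c | τ ⊆ c} = ⋂ i ∈ τ, U i := by
    ext x
    exact subset_codeword_iff
  rw [codeOf_eq_image_codeword, codeOf_eq_image_codeword, ← hpre, Set.image_inter_preimage]
  rfl

lemma inter_biInter_mem {F : Set (Set α)} (hinter : ∀ A ∈ F, ∀ B ∈ F, A ∩ B ∈ F)
    {Xs : Set α} (hXs : Xs ∈ F) {U : Fin n → Set α} (hU : ∀ i, U i ∈ F)
    (s : Finset (Fin n)) : Xs ∩ ⋂ i ∈ s, U i ∈ F := by
  classical
  induction s using Finset.induction_on with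
  | empty => simpa using hXs
  | insert a s _ ih =>
    rw [Finset.set_biInter_insert, Set.inter_left_comm]
    exact hinter _ (hU a) _ ih

end Codes

theorem stmt15_general {α : Type*} {n : ℕ} (F : Set (Set α))
    (hinter : ∀ A ∈ F, ∀ B ∈ F, A ∩ B ∈ F)
    (Xs : Set α) (hXs : Xs ∈ F)
    (U : Fin n → Set α) (hU : ∀ i, U i ∈ F) :
    (∀ (m : ℕ) (σs : Fin m → Finset (Fin n)),
      ∃ V : Fin m → Set α, (∀ j, V j ∈ F) ∧
        ∃ Y : Set α, (Y ∈ F ∨ Y = Xs) ∧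
          codeOf V Y =
            (fun c => Finset.univ.filter (fun j => σs j ⊆ c)) '' codeOf U Xs) ∧
    (∀ τ : Finset (Fin n),
      ∃ (V : Fin n → Set α) (Y : Set α), (∀ i, V i ∈ F) ∧ (Y ∈ F ∨ Y = Xs) ∧
        codeOf V Y = Tk (codeOf U Xs) τ) := by
  refine ⟨fun m σs => ?_, fun τ => ?_⟩
  · refine ⟨fun j => Xs ∩ ⋂ i ∈ σs j, U i, fun j => inter_biInter_mem hinter hXs hU (σs j),
      Xs, Or.inr rfl, ?_⟩
    rw [codeOf_eq_image_codeword, codeOf_eq_image_codeword, Set.image_image]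
    exact Set.image_congr fun x hx => codeword_inter_biInter hx σs
  · exact ⟨U, Xs ∩ ⋂ i ∈ τ, U i, hU, Or.inl (inter_biInter_mem hinter hXs hU τ),
      (tk_codeOf U Xs τ).symm⟩

/-- Codes realizable by sets from an intersection-closed family form a down-set:
if `C = code(U, X)` with all `U_i ∈ F` and `X ∈ F`, then every image of `C` under a
code morphism (defined by trunks) and every trunk of `C` is realizable by sets from
`F` relative to some `Y ∈ F ∪ {X}`. -/
theorem stmt15 {α : Type*} {n : ℕ} (F : Set (Set α))
    (hempty : ∅ ∈ F) (hinter : ∀ A ∈ F, ∀ B ∈ F, A ∩ B ∈ F)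
    (Xs : Set α) (hXs : Xs ∈ F)
    (U : Fin n → Set α) (hU : ∀ i, U i ∈ F) :
    (∀ (m : ℕ) (σs : Fin m → Finset (Fin n)),
      ∃ V : Fin m → Set α, (∀ j, V j ∈ F) ∧
        ∃ Y : Set α, (Y ∈ F ∨ Y = Xs) ∧
          codeOf V Y =
            (fun c => Finset.univ.filter (fun j => σs j ⊆ c)) '' codeOf U Xs) ∧
    (∀ τ : Finset (Fin n),
      ∃ (V : Fin n → Set α) (Y : Set α), (∀ i, V i ∈ F) ∧ (Y ∈ F ∨ Y = Xs) ∧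
        codeOf V Y = Tk (codeOf U Xs) τ) :=
  stmt15_general F hinter Xs hXs U hU
end
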